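/- The splitting field over Q of the polynomial 1 - 4X + 2X^2 + 5X^3 - 2X^4 - X^5 is the unique degree-5 subfield of Q(ζ_11), namely the maximal real subfield of the 11th cyclotomic field. -/

import Mathlib

open Polynomial IntermediateField

noncomputable def quinticPoly : Polynomial ℚ :=
  1 - 4 * X + 2 * X ^ 2 + 5 * X ^ 3 - 2 * X ^ 4 - X ^ 5

/-!
Let `ζ` be a primitive 11th root of unity, `η = ζ + ζ⁻¹` and `ηₖ = ζᵏ + ζ⁻ᵏ`. The roots of
`quinticPoly` are the five sums `ηₖ + η₃ₖ`; expanded in powers of `η` they are explicit rational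
polynomials in `η`, and conversely `η` is a rational polynomial in one of them. Hence the splitting
field is `ℚ(η)`. Its degree is `5`: `η` is a root of the quintic `ψ` below, and `ζ` is a root of
`X² - ηX + 1` over `ℚ(η)`, so `10 = [ℚ(ζ) : ℚ] ≤ 2 [ℚ(η) : ℚ] ≤ 10`.
-/

theorem aeval_mem_adjoin_simple {F E : Type*} [Field F] [Field E] [Algebra F E] (α : E)
    (p : F[X]) : aeval α p ∈ F⟮α⟯ :=
  AdjoinSimple.coe_aeval_gen_apply F α p ▸ (aeval (AdjoinSimple.gen F α) p).2

section Degree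

variable {K L : Type*} [Field K] [Field L] [Algebra K L]

theorem finrank_adjoin_simple_le_natDegree {x : L} {p : K[X]} (hp : p.Monic)
    (hx : aeval x p = 0) : Module.finrank K K⟮x⟯ ≤ p.natDegree := by
  rw [adjoin.finrank ⟨p, hp, hx⟩]
  exact natDegree_le_natDegree (minpoly.min K x hp hx)

theorem finrank_adjoin_simple_le_two_mul_finrank_adjoin_add_inv {ζ : L} (hζ : ζ ≠ 0) :
    Module.finrank K K⟮ζ⟯ ≤ 2 * Module.finrank K K⟮ζ + ζ⁻¹⟯ := by
  have hquad : aeval ζ (X ^ 2 - C (AdjoinSimple.gen K (ζ + ζ⁻¹)) * X + 1) = 0 := by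
    simp only [map_add, map_sub, map_mul, map_pow, aeval_X, aeval_C, map_one,
      AdjoinSimple.algebraMap_gen]
    field_simp
    ring
  have hquad_le : Module.finrank K⟮ζ + ζ⁻¹⟯ K⟮ζ + ζ⁻¹⟯⟮ζ⟯ ≤ 2 :=
    (finrank_adjoin_simple_le_natDegree (by monicity!) hquad).trans_eq (by compute_degree!)
  have htower : K⟮ζ + ζ⁻¹⟯⟮ζ⟯.restrictScalars K = K⟮ζ⟯ := by
    rw [restrictScalars_adjoin_eq_sup, sup_eq_right, adjoin_simple_le_iff]
    exact add_mem (mem_adjoin_simple_self K ζ) (inv_mem (mem_adjoin_simple_self K ζ))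
  calc Module.finrank K K⟮ζ⟯
      = Module.finrank K K⟮ζ + ζ⁻¹⟯ * Module.finrank K⟮ζ + ζ⁻¹⟯ K⟮ζ + ζ⁻¹⟯⟮ζ⟯ := by
        rw [← htower]
        exact (Module.finrank_mul_finrank K K⟮ζ + ζ⁻¹⟯ K⟮ζ + ζ⁻¹⟯⟮ζ⟯).symm
    _ ≤ 2 * Module.finrank K K⟮ζ + ζ⁻¹⟯ := by rw [mul_comm]; gcongr

end Degree

theorem finrank_adjoin_primitiveRoot_eq_totient {L : Type*} [Field L] [CharZero L] {ζ : L}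
    {n : ℕ} (hn : 0 < n) (hζ : IsPrimitiveRoot ζ n) : Module.finrank ℚ ℚ⟮ζ⟯ = n.totient := by
  rw [adjoin.finrank (hζ.isIntegral hn).tower_top, ← cyclotomic_eq_minpoly_rat hζ hn,
    natDegree_cyclotomic]

/-- The minimal polynomial `ψ` of `ζ + ζ⁻¹`: `ζ⁵ ψ(ζ + ζ⁻¹) = 1 + ζ + ⋯ + ζ¹⁰`. -/
noncomputable def periodPoly : ℚ[X] :=
  X ^ 5 + X ^ 4 - 4 * X ^ 3 - 3 * X ^ 2 + 3 * X + 1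

/-- The roots `η₄ + η₅, η₁ + η₃, η₁ + η₄, η₂ + η₅, η₂ + η₃` of `quinticPoly` as polynomials
in `η = η₁`. -/
noncomputable def quinticRootPoly : Fin 5 → ℚ[X] :=
  ![1 + 2 * X - X ^ 2 - X ^ 3, X ^ 3 - 2 * X, 2 + X - 4 * X ^ 2 + X ^ 4,
    -3 + 2 * X + 4 * X ^ 2 - X ^ 3 - X ^ 4, -2 - 3 * X + X ^ 2 + X ^ 3]

theorem quinticPoly_ne_zero : quinticPoly ≠ 0 := fun h ↦ by
  simpa [quinticPoly] using congrArg (eval 0) h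

theorem periodPoly_monic : periodPoly.Monic := by
  unfold periodPoly; monicity!

theorem natDegree_periodPoly : periodPoly.natDegree = 5 := by
  unfold periodPoly; compute_degree!

section PeriodIdentities

variable {R : Type*} [CommRing R] [Algebra ℚ R] {η : R}

theorem aeval_periodPoly :
    aeval η periodPoly = η ^ 5 + η ^ 4 - 4 * η ^ 3 - 3 * η ^ 2 + 3 * η + 1 := by
  simp only [periodPoly, map_add, map_sub, map_mul, map_pow, map_ofNat, map_one, aeval_X]

theorem aeval_quinticPoly_eq_neg_prod (hη : aeval η periodPoly = 0) (x : R) :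
    aeval x quinticPoly = -∏ i, (x - aeval η (quinticRootPoly i)) := by
  rw [aeval_periodPoly] at hη
  simp only [quinticPoly, quinticRootPoly, Fin.prod_univ_five, Matrix.cons_val, map_add, map_sub,
    map_neg, map_mul, map_pow, map_ofNat, map_one, aeval_X]
  linear_combination (1 + 21 * η + 20 * η ^ 2 - 71 * η ^ 3 - 70 * η ^ 4 + 96 * η ^ 5 + 78 * η ^ 6
    - 61 * η ^ 7 - 40 * η ^ 8 + 18 * η ^ 9 + 10 * η ^ 10 - 2 * η ^ 11 - η ^ 12
    + x * (8 - 21 * η ^ 2 - 8 * η ^ 3 + 25 * η ^ 4 + 12 * η ^ 5 - 12 * η ^ 6 - 6 * η ^ 7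
      + 2 * η ^ 8 + η ^ 9)
    + x ^ 2 * (-6 - 2 * η + 13 * η ^ 2 + η ^ 3 - 7 * η ^ 4 + η ^ 6)
    + x ^ 3 * (-2 + 2 * η - η ^ 3)) * hη

theorem eq_aeval_aeval_quinticRootPoly_zero (hη : aeval η periodPoly = 0) :
    η = aeval (aeval η (quinticRootPoly 0))
      (3 - 7 * X - 7 * X ^ 2 + 5 * X ^ 3 + 2 * X ^ 4 : ℚ[X]) := by
  rw [aeval_periodPoly] at hη
  simp only [quinticRootPoly, Matrix.cons_val, map_add, map_sub, map_mul, map_pow, map_ofNat,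
    map_one, aeval_X]
  linear_combination (4 - 15 * η - 21 * η ^ 2 + 12 * η ^ 3 + 21 * η ^ 4 + 2 * η ^ 5 - 6 * η ^ 6
    - 2 * η ^ 7) * hη

end PeriodIdentities

section RootSet

variable {L : Type*} [Field L] [Algebra ℚ L] {η : L}

theorem rootSet_quinticPoly (hη : aeval η periodPoly = 0) :
    quinticPoly.rootSet L = Set.range fun i ↦ aeval η (quinticRootPoly i) := by
  ext x
  rw [mem_rootSet_of_ne quinticPoly_ne_zero, aeval_quinticPoly_eq_neg_prod hη, neg_eq_zero,
    Finset.prod_eq_zero_iff]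
  simp only [Finset.mem_univ, true_and, Set.mem_range]
  exact exists_congr fun i ↦ by rw [sub_eq_zero, eq_comm]

theorem adjoin_rootSet_quinticPoly (hη : aeval η periodPoly = 0) :
    adjoin ℚ (quinticPoly.rootSet L) = ℚ⟮η⟯ := by
  rw [rootSet_quinticPoly hη]
  refine le_antisymm (adjoin_le_iff.mpr ?_) (adjoin_simple_le_iff.mpr ?_)
  · rintro _ ⟨i, rfl⟩
    exact aeval_mem_adjoin_simple η _
  · refine adjoin_simple_le_iff.mpr (subset_adjoin ℚ _ (Set.mem_range_self 0)) ?_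
    have hη_eq := eq_aeval_aeval_quinticRootPoly_zero hη
    generalize aeval η (quinticRootPoly 0) = r at hη_eq ⊢
    rw [hη_eq]
    exact aeval_mem_adjoin_simple r _

end RootSet

section PrimitiveRoot

variable {L : Type*} [Field L] [CharZero L] {ζ : L}

theorem aeval_add_inv_periodPoly (hζ : IsPrimitiveRoot ζ 11) :
    aeval (ζ + ζ⁻¹) periodPoly = 0 := by
  have hΦ := hζ.geom_sum_eq_zero (by norm_num)
  have hζ0 : ζ ≠ 0 := hζ.ne_zero (by norm_num)
  simp only [Finset.sum_range_succ, Finset.sum_range_zero] at hΦ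
  rw [aeval_periodPoly]
  field_simp
  linear_combination hΦ

theorem finrank_adjoin_add_inv_eq_five (hζ : IsPrimitiveRoot ζ 11) :
    Module.finrank ℚ ℚ⟮ζ + ζ⁻¹⟯ = 5 := by
  have hle : Module.finrank ℚ ℚ⟮ζ + ζ⁻¹⟯ ≤ 5 := natDegree_periodPoly ▸
    finrank_adjoin_simple_le_natDegree periodPoly_monic (aeval_add_inv_periodPoly hζ)
  have hge := finrank_adjoin_simple_le_two_mul_finrank_adjoin_add_inv (K := ℚ)
    (hζ.ne_zero (by norm_num))
  rw [finrank_adjoin_primitiveRoot_eq_totient (by norm_num) hζ,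
    Nat.totient_prime (by norm_num)] at hge
  omega

end PrimitiveRoot

theorem quintic_splitting_field :
    let ζ : ℂ := Complex.exp (2 * Real.pi * Complex.I / 11)
    IntermediateField.adjoin ℚ (quinticPoly.rootSet ℂ) = ℚ⟮ζ + ζ⁻¹⟯ ∧
    Module.finrank ℚ ℚ⟮ζ + ζ⁻¹⟯ = 5 := by
  intro ζ
  have hζ : IsPrimitiveRoot ζ 11 := by
    simpa using Complex.isPrimitiveRoot_exp 11 (by norm_num)
  exact ⟨adjoin_rootSet_quinticPoly (aeval_add_inv_periodPoly hζ),
    finrank_adjoin_add_inv_eq_five hζ⟩
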